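/- Let ζ = i ∈ ℂ (a primitive 4th root of unity) and for a natural number d define the Vafa–Intriligator sum S_d = Σ_{0 ≤ i₂ < i₁ ≤ 3} (ζ^{i₁} + ζ^{i₂})^{4d+4} · (ζ^{i₁} − ζ^{i₂}) · (ζ^{i₂} − ζ^{i₁}) / (ζ^{i₁} · ζ^{i₂})³. Then S_d = (−1)^d · 2^{2d+5}. -/

import Mathlib

open Finset Complex

/-- The Vafa–Intriligator sum for `G(2,4)` in degree `d`, with `ζ = i` a
primitive 4th root of unity:
`S_d = Σ_{0 ≤ i₂ < i₁ ≤ 3} (ζ^{i₁} + ζ^{i₂})^{4d+4} (ζ^{i₁} − ζ^{i₂})(ζ^{i₂} − ζ^{i₁}) / (ζ^{i₁} ζ^{i₂})³`. -/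
noncomputable def vafaIntriligatorSum (d : ℕ) : ℂ :=
  ∑ i₁ ∈ Finset.range 4, ∑ i₂ ∈ Finset.range i₁,
    (Complex.I ^ i₁ + Complex.I ^ i₂) ^ (4 * d + 4) *
      (Complex.I ^ i₁ - Complex.I ^ i₂) * (Complex.I ^ i₂ - Complex.I ^ i₁) /
        (Complex.I ^ i₁ * Complex.I ^ i₂) ^ 3

/-!
The summand `f(x, y) = (x + y)^(4d+4) (x - y)(y - x) / (xy)^3` is homogeneous of degree `4d`,
so it is unchanged when both roots are rotated by the same 4th root of unity, and it vanishes on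
the two antipodal pairs `y = -x`. Each of the four remaining pairs of adjacent roots is a rotation
of `(1, i)`, and `f(1, i) = (1 + i)^(4d+4) · 2i / (-i) = 8 (-4)^d`.
-/

def vafaIntriligatorTerm {K : Type*} [Field K] (n : ℕ) (x y : K) : K :=
  (x + y) ^ n * (x - y) * (y - x) / (x * y) ^ 3

section vafaIntriligatorTerm

variable {K : Type*} [Field K] (n : ℕ)

theorem vafaIntriligatorTerm_comm (x y : K) :
    vafaIntriligatorTerm n x y = vafaIntriligatorTerm n y x := by
  unfold vafaIntriligatorTerm
  ring

theorem vafaIntriligatorTerm_neg_right (x : K) :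
    vafaIntriligatorTerm (n + 1) x (-x) = 0 := by
  simp [vafaIntriligatorTerm]

theorem vafaIntriligatorTerm_mul_mul {a : K} (ha : a ≠ 0) (x y : K) :
    vafaIntriligatorTerm (n + 4) (a * x) (a * y) = a ^ n * vafaIntriligatorTerm (n + 4) x y := by
  calc (a * x + a * y) ^ (n + 4) * (a * x - a * y) * (a * y - a * x) / (a * x * (a * y)) ^ 3
      = a ^ n * ((x + y) ^ (n + 4) * (x - y) * (y - x)) * a ^ 6 / ((x * y) ^ 3 * a ^ 6) := by
        rw [← mul_add, mul_pow]
        ring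
    _ = a ^ n * ((x + y) ^ (n + 4) * (x - y) * (y - x) / (x * y) ^ 3) := by
      rw [mul_div_mul_right _ _ (pow_ne_zero 6 ha), mul_div_assoc]

theorem vafaIntriligatorTerm_mul_mul_of_pow_four_eq_one {a : K} (ha : a ^ 4 = 1) (d : ℕ)
    (x y : K) :
    vafaIntriligatorTerm (4 * d + 4) (a * x) (a * y) = vafaIntriligatorTerm (4 * d + 4) x y := by
  have ha₀ : a ≠ 0 := by rintro rfl; simp at ha
  rw [vafaIntriligatorTerm_mul_mul _ ha₀, pow_mul, ha, one_pow, one_mul]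

end vafaIntriligatorTerm

theorem vafaIntriligatorTerm_one_I (d : ℕ) :
    vafaIntriligatorTerm (4 * d + 4) 1 I = 8 * (-4 : ℂ) ^ d := by
  have h : (1 + I) ^ 4 = -4 := by linear_combination (I ^ 2 + 4 * I + 5) * I_sq
  rw [vafaIntriligatorTerm, show 4 * d + 4 = 4 * (d + 1) by ring, pow_mul, h, one_mul, I_pow_three]
  field_simp
  linear_combination -4 * (-4 : ℂ) ^ d * I_sq

theorem I_pow_pow_four (k : ℕ) : (I ^ k) ^ 4 = 1 := by
  rw [← pow_mul, mul_comm, pow_mul, I_pow_four, one_pow]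

theorem vafaIntriligatorTerm_I_pow_succ (d k : ℕ) :
    vafaIntriligatorTerm (4 * d + 4) (I ^ (k + 1)) (I ^ k) = 8 * (-4 : ℂ) ^ d := by
  have h := vafaIntriligatorTerm_mul_mul_of_pow_four_eq_one (I_pow_pow_four k) d I 1
  rw [mul_one, ← pow_succ] at h
  rw [h, vafaIntriligatorTerm_comm, vafaIntriligatorTerm_one_I]

theorem vafaIntriligatorTerm_I_pow_add_two (d k : ℕ) :
    vafaIntriligatorTerm (4 * d + 4) (I ^ (k + 2)) (I ^ k) = 0 := by
  rw [pow_add, I_sq, mul_neg_one, vafaIntriligatorTerm_comm]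
  exact vafaIntriligatorTerm_neg_right _ _

theorem vafaIntriligatorTerm_I_pow_three_one (d : ℕ) :
    vafaIntriligatorTerm (4 * d + 4) (I ^ 3) 1 = 8 * (-4 : ℂ) ^ d := by
  have h := vafaIntriligatorTerm_mul_mul_of_pow_four_eq_one (I_pow_pow_four 3) d 1 I
  rw [mul_one, ← pow_succ, I_pow_four] at h
  rw [h, vafaIntriligatorTerm_one_I]

theorem vafaIntriligatorSum_eq_sum_vafaIntriligatorTerm (d : ℕ) :
    vafaIntriligatorSum d = ∑ i₁ ∈ range 4, ∑ i₂ ∈ range i₁,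
      vafaIntriligatorTerm (4 * d + 4) (I ^ i₁) (I ^ i₂) :=
  rfl

theorem vafaIntriligatorSum_eq (d : ℕ) :
    vafaIntriligatorSum d = (-1 : ℂ) ^ d * 2 ^ (2 * d + 5) := by
  simp only [vafaIntriligatorSum_eq_sum_vafaIntriligatorTerm, sum_range_succ, sum_range_zero,
    zero_add]
  rw [vafaIntriligatorTerm_I_pow_succ d 0, vafaIntriligatorTerm_I_pow_succ d 1,
    vafaIntriligatorTerm_I_pow_succ d 2, vafaIntriligatorTerm_I_pow_add_two d 0,
    vafaIntriligatorTerm_I_pow_add_two d 1, pow_zero, vafaIntriligatorTerm_I_pow_three_one,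
    show (-4 : ℂ) = -1 * 2 ^ 2 by norm_num, mul_pow, ← pow_mul]
  ring
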